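/- For every c > 0 there exists c' > 0 such that the following holds for all n ≥ 1 and all L with n ≤ L ≤ 2^{n/2}. Let X = (x_0,…,x_{L−1}) be a sequence in the support of the snake distribution D_{h,L} on {0,1}^n that is c-sparse. Draw j uniformly from {0,…,L−1} and let Y be obtained from X by flicking the tail at j. Then for every vertex v ∈ {0,1}^n, Pr_{j,Y}[v ∈ Y[j]] ≤ c'·n²/L. -/
import Mathlib


/-- Flip bit `t mod n` of a vertex of the Boolean hypercube `{0,1}^n`. -/
def flipBitHC {n : ℕ} (x : Fin n → Bool) (t : ℕ) : Fin n → Bool :=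
  fun i => if (i : ℕ) = t % n then !(x i) else x i

/-- Regrow a tail backwards from `start` (the vertex at time `j`): after `k` backward
steps we are at time `j - k`, each step keeping or flipping bit `(time) mod n`. -/
def flickAux {n : ℕ} (start : Fin n → Bool) (j : ℕ) (b : ℕ → Bool) :
    ℕ → (Fin n → Bool)
  | 0 => start
  | k + 1 =>
      if b (j - (k + 1)) then flipBitHC (flickAux start j b k) (j - (k + 1))
      else flickAux start j b k

/-- The snake obtained from `x` by flicking the tail at `j` with fresh coins `b`. -/
def flickTail {n : ℕ} (x : ℕ → Fin n → Bool) (j : ℕ) (b : ℕ → Bool) (t : ℕ) :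
    Fin n → Bool :=
  if j ≤ t then x t else flickAux (x j) j b (j - t)

/-- Extend a finite string of coin flips to an infinite one (by `false`). -/
def extBits {s : ℕ} (ω : Fin s → Bool) : ℕ → Bool :=
  fun t => if ht : t < s then ω ⟨t, ht⟩ else false

/-- `delta n x v i` is the smallest `k` such that `x` agrees with `v` on every
coordinate outside `{i, i-1, …, i-k+1}` (indices mod `n`). -/
noncomputable def delta {α : Type*} (n : ℕ) (x v : Fin n → α) (i : ℕ) : ℕ :=
  sInf {k | ∀ j : Fin n, (∀ l < k, (j : ℕ) ≠ (i + n - l) % n) → x j = v j}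

/-- A snake `x_0, …, x_{L-1}` in `{0,1}^n` is `c`-sparse if for every vertex `v` and
every `k ≤ n`, `|{t < L : Δ(x_t, v, t mod n) = k}| ≤ c·n·(n + L/2^{n-k})`. -/
noncomputable def IsSparse (c : ℝ) (n L : ℕ) (x : ℕ → Fin n → Bool) : Prop :=
  ∀ v : Fin n → Bool, ∀ k ≤ n,
    (((Finset.range L).filter (fun t => delta n (x t) v (t % n) = k)).card : ℝ)
      ≤ c * n * (n + (L : ℝ) / 2 ^ (n - k))

/-- Probability of an event on a finite sample space, under the uniform distribution. -/
noncomputable def unifPr {Ω : Type*} [Fintype Ω] (P : Ω → Prop) : ℝ :=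
  (Nat.card {ω : Ω // P ω} : ℝ) / (Fintype.card Ω : ℝ)

def parityHC (n : ℕ) (b : ℕ → Bool) (lo hi : ℕ) (i : ℕ) : ZMod 2 :=
  ∑ u ∈ Finset.Ico lo hi, if u % n = i ∧ b u = true then 1 else 0

lemma zmod2_cases : ∀ z : ZMod 2, z = 0 ∨ z = 1 := by decide

lemma flickAux_apply {n : ℕ} (start : Fin n → Bool) (j : ℕ) (b : ℕ → Bool) :
    ∀ s, s ≤ j → ∀ i : Fin n,
      flickAux start j b s i =
        xor (decide (parityHC n b (j - s) j (i : ℕ) = 1)) (start i) := by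
  intro s
  induction s with
  | zero =>
      intro _ i
      simp [flickAux, parityHC]
  | succ s ih =>
      intro hs i
      have hs' : s ≤ j := by omega
      have hstep : parityHC n b (j - (s+1)) j (i : ℕ) =
          (if (j - (s+1)) % n = (i : ℕ) ∧ b (j - (s+1)) = true then 1 else 0)
            + parityHC n b (j - s) j (i : ℕ) := by
        unfold parityHC
        rw [← Finset.sum_Ico_consecutive _ (by omega : j - (s+1) ≤ j - s) (by omega : j - s ≤ j)]
        congr 1
        have h1 : j - s = (j - (s+1)) + 1 := by omega
        rw [h1, Finset.sum_Ico_succ_top (by omega)]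
        simp
      by_cases hb : b (j - (s+1)) = true <;>
      by_cases hc : (j - (s+1)) % n = (i : ℕ) <;>
      rcases zmod2_cases (parityHC n b (j - s) j (i:ℕ)) with hp | hp <;>
      · rw [hp] at hstep
        simp only [hb, hc, Bool.not_eq_true] at hstep ⊢
        simp at hstep
        simp [flickAux, flipBitHC, hb, hc, hstep, hp, ih hs']
        all_goals omega

lemma delta_le_n {α : Type*} {n : ℕ} (x v : Fin n → α) {i : ℕ} (hi : i < n) :
    delta n x v i ≤ n := by
  apply Nat.sInf_le
  intro jj hjj
  exfalso
  rcases le_or_gt (jj : ℕ) i with hle | hlt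
  · have hl : i - (jj : ℕ) < n := by omega
    apply hjj (i - (jj : ℕ)) hl
    have h1 : i + n - (i - (jj : ℕ)) = n + (jj : ℕ) := by omega
    rw [h1, Nat.add_mod_left, Nat.mod_eq_of_lt jj.isLt]
  · have hl : i + n - (jj : ℕ) < n := by omega
    apply hjj (i + n - (jj : ℕ)) hl
    have h1 : i + n - (i + n - (jj : ℕ)) = (jj : ℕ) := by omega
    rw [h1, Nat.mod_eq_of_lt jj.isLt]

lemma delta_le_of_flick {n : ℕ} (hn : 1 ≤ n) (start v : Fin n → Bool) {j s : ℕ}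
    (hs : s ≤ j) (b : ℕ → Bool) (h : flickAux start j b s = v) :
    delta n start v (j % n) ≤ min s n + 1 := by
  rcases le_or_gt n s with hns | hsn
  · have := delta_le_n start v (Nat.mod_lt j hn)
    omega
  · -- s < n, min s n = s; show s + 1 is in the set
    have hmin : min s n = s := by omega
    rw [hmin]
    apply Nat.sInf_le
    intro jj hjj
    have hpar : parityHC n b (j - s) j (jj : ℕ) = 0 := by
      unfold parityHC
      apply Finset.sum_eq_zero
      intro u hu
      rw [Finset.mem_Ico] at hu
      rw [if_neg]
      rintro ⟨hmod, -⟩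
      set r := j - u with hr
      have hr1 : 1 ≤ r ∧ r ≤ s := by omega
      refine hjj r (by omega) ?_
      have h1 : j % n + n - r = j % n + (n - r) := by omega
      rw [h1, Nat.mod_add_mod]
      have h2 : j + (n - r) = u + n := by
        have := Nat.mod_le j n
        omega
      rw [h2, Nat.add_mod_right, hmod]
    have := flickAux_apply start j b s hs jj
    rw [h] at this
    rw [this, hpar]
    simp

lemma count_flick_le {n L : ℕ} (hn : 1 ≤ n) {j s : ℕ} (hj : j < L) (hs : s ≤ j)
    (start v : Fin n → Bool) :
    (Finset.univ.filter (fun ω : Fin L → Bool =>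
        flickAux start j (extBits ω) s = v)).card ≤ 2 ^ (L - min s n) := by
  classical
  set m := min s n with hm
  have hmj : m ≤ j := le_trans (min_le_left _ _) hs
  have hmn : m ≤ n := min_le_right _ _
  have hms : m ≤ s := min_le_left _ _
  set p : Fin L → Prop := fun u => j - m ≤ (u : ℕ) ∧ (u : ℕ) < j with hp
  have hwin : (Finset.univ.filter (fun u : Fin L => p u)).card = m := by
    have h0 : (Finset.univ.filter (fun u : Fin L => p u)).card
        = (Finset.Ico (j - m) j).card := by
      refine Finset.card_bij' (fun (u : Fin L) _ => (u : ℕ))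
        (fun u hu => (⟨u, by rw [Finset.mem_Ico] at hu; omega⟩ : Fin L)) ?_ ?_ ?_ ?_
      · intro a ha
        rw [Finset.mem_filter] at ha
        rw [Finset.mem_Ico]; exact ha.2
      · intro a ha
        rw [Finset.mem_Ico] at ha
        simp only [Finset.mem_filter, Finset.mem_univ, true_and, hp]
        exact ⟨ha.1, ha.2⟩
      · intro a ha; simp
      · intro a ha; simp
    rw [h0, Nat.card_Ico]; omega
  have hcardT : Fintype.card ({u : Fin L // ¬ p u} → Bool) = 2 ^ (L - m) := by
    rw [Fintype.card_fun, Fintype.card_bool]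
    congr 1
    rw [Fintype.card_subtype, Finset.filter_not,
      Finset.card_sdiff_of_subset (Finset.filter_subset _ _), Finset.card_univ, Fintype.card_fin, hwin]
  have hinj : Set.InjOn (fun (ω : Fin L → Bool) (u : {u : Fin L // ¬ p u}) => ω u.1)
      (Finset.univ.filter (fun ω : Fin L → Bool => flickAux start j (extBits ω) s = v)) := by
    intro ω hω ω' hω' hfe
    rw [Finset.mem_coe, Finset.mem_filter] at hω hω'
    funext u
    by_cases hu : p u
    · obtain ⟨hu1, hu2⟩ := hu
      have hu0L : (u : ℕ) < L := u.isLt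
      have hilt : (u : ℕ) % n < n := Nat.mod_lt _ hn
      set i : Fin n := ⟨(u : ℕ) % n, hilt⟩ with hi
      have e1 := flickAux_apply start j (extBits ω) s hs i
      have e2 := flickAux_apply start j (extBits ω') s hs i
      rw [hω.2] at e1; rw [hω'.2] at e2
      have h3 : xor (decide (parityHC n (extBits ω) (j - s) j (i : ℕ) = 1)) (start i)
          = xor (decide (parityHC n (extBits ω') (j - s) j (i : ℕ) = 1)) (start i) :=
        e1.symm.trans e2
      have epar : parityHC n (extBits ω) (j - s) j (i : ℕ)
          = parityHC n (extBits ω') (j - s) j (i : ℕ) := by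
        rcases zmod2_cases (parityHC n (extBits ω) (j - s) j (i : ℕ)) with h4 | h4 <;>
        rcases zmod2_cases (parityHC n (extBits ω') (j - s) j (i : ℕ)) with h5 | h5 <;>
          rw [h4, h5] at h3 ⊢ <;> first | rfl | (cases start i <;> simp at h3)
      have hsub : (u : ℕ) ∈ Finset.Ico (j - s) j := by
        rw [Finset.mem_Ico]; omega
      have e3 := Finset.add_sum_erase _
        (fun u' => if u' % n = (i : ℕ) ∧ extBits ω u' = true then (1 : ZMod 2) else 0) hsub
      have e4 := Finset.add_sum_erase _
        (fun u' => if u' % n = (i : ℕ) ∧ extBits ω' u' = true then (1 : ZMod 2) else 0) hsub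
      have erest : ∀ u' ∈ (Finset.Ico (j - s) j).erase (u : ℕ),
          (if u' % n = (i : ℕ) ∧ extBits ω u' = true then (1 : ZMod 2) else 0)
            = (if u' % n = (i : ℕ) ∧ extBits ω' u' = true then (1 : ZMod 2) else 0) := by
        intro u' hu'
        rw [Finset.mem_erase, Finset.mem_Ico] at hu'
        obtain ⟨hne, hlo, hhi⟩ := hu'
        by_cases hmod : u' % n = (i : ℕ)
        · have hu'L : u' < L := by omega
          have hnw : ¬ p (⟨u', hu'L⟩ : Fin L) := by
            rintro ⟨hw1', hw2'⟩
            have hw1 : j - m ≤ u' := hw1'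
            have hw2 : u' < j := hw2'
            apply hne
            have hmod' : u' % n = (u : ℕ) % n := hmod
            rcases le_total u' (u : ℕ) with hle | hle
            · have hd : n ∣ (u : ℕ) - u' := (Nat.modEq_iff_dvd' hle).mp hmod'
              have hlt : (u : ℕ) - u' < n := by omega
              have := Nat.eq_zero_of_dvd_of_lt hd hlt
              omega
            · have hd : n ∣ u' - (u : ℕ) := (Nat.modEq_iff_dvd' hle).mp hmod'.symm
              have hlt : u' - (u : ℕ) < n := by omega
              have := Nat.eq_zero_of_dvd_of_lt hd hlt
              omega
          have hb2 : ω ⟨u', hu'L⟩ = ω' ⟨u', hu'L⟩ :=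
            congrFun hfe (⟨⟨u', hu'L⟩, hnw⟩ : {u : Fin L // ¬ p u})
          have hext : extBits ω u' = extBits ω' u' := by
            simp only [extBits, hu'L, dif_pos]
            exact hb2
          rw [hext]
        · rw [if_neg (by tauto), if_neg (by tauto)]
      have epar' := epar
      unfold parityHC at epar'
      rw [← e3, ← e4, Finset.sum_congr rfl erest] at epar'
      have efinal : (if (u : ℕ) % n = (i : ℕ) ∧ extBits ω (u : ℕ) = true then (1 : ZMod 2) else 0)
          = (if (u : ℕ) % n = (i : ℕ) ∧ extBits ω' (u : ℕ) = true then (1 : ZMod 2) else 0) :=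
        add_right_cancel epar'
      have hcond : (u : ℕ) % n = (i : ℕ) := rfl
      rw [hcond] at efinal
      simp only [eq_self_iff_true, true_and] at efinal
      have hbits : extBits ω (u : ℕ) = extBits ω' (u : ℕ) := by
        rcases Bool.eq_false_or_eq_true (extBits ω (u : ℕ)) with h1 | h1 <;>
          rcases Bool.eq_false_or_eq_true (extBits ω' (u : ℕ)) with h2 | h2 <;>
          rw [h1, h2] <;> rw [h1, h2] at efinal <;>
          simp only [if_true, Bool.false_eq_true, if_false, if_neg] at efinal <;>
          first
            | rfl
            | exact absurd efinal (by decide)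
            | exact absurd efinal.symm (by decide)
      have hω_eq : extBits ω (u : ℕ) = ω u := by simp [extBits, hu0L]
      have hω'_eq : extBits ω' (u : ℕ) = ω' u := by simp [extBits, hu0L]
      rw [hω_eq, hω'_eq] at hbits
      exact hbits
    · exact congrFun hfe ⟨u, hu⟩
  have := Finset.card_le_card_of_injOn
    (f := fun (ω : Fin L → Bool) (u : {u : Fin L // ¬ p u}) => ω u.1)
    (fun ω _ => Finset.mem_univ _) hinj
  calc (Finset.univ.filter (fun ω : Fin L → Bool => flickAux start j (extBits ω) s = v)).card
      ≤ (Finset.univ : Finset ({u : Fin L // ¬ p u} → Bool)).card := this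
    _ = 2 ^ (L - m) := by rw [Finset.card_univ, hcardT]

lemma count_event_le {n L : ℕ} (hn : 1 ≤ n) {j : ℕ} (hj : j < L)
    (x : ℕ → Fin n → Bool) (v : Fin n → Bool) :
    ((Finset.univ.filter (fun ω : Fin L → Bool =>
        ∃ t ≤ j, flickTail x j (extBits ω) t = v)).card : ℝ)
      ≤ ∑ s ∈ Finset.range (j + 1),
          (if delta n (x j) v (j % n) ≤ min s n + 1 then (2 : ℝ) ^ (L - min s n) else 0) := by
  classical
  have hsubset : (Finset.univ.filter (fun ω : Fin L → Bool =>
        ∃ t ≤ j, flickTail x j (extBits ω) t = v))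
      ⊆ (Finset.range (j + 1)).biUnion (fun s => Finset.univ.filter
          (fun ω : Fin L → Bool => flickAux (x j) j (extBits ω) s = v)) := by
    intro ω hω
    rw [Finset.mem_filter] at hω
    obtain ⟨-, t, ht, hflick⟩ := hω
    rw [Finset.mem_biUnion]
    refine ⟨j - t, by rw [Finset.mem_range]; omega, ?_⟩
    rw [Finset.mem_filter]
    refine ⟨Finset.mem_univ _, ?_⟩
    unfold flickTail at hflick
    by_cases hjt : j ≤ t
    · rw [if_pos hjt] at hflick
      have h0 : j - t = 0 := by omega
      rw [h0]
      show x j = v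
      have htj : t = j := by omega
      rw [← htj]
      exact hflick
    · rw [if_neg hjt] at hflick
      exact hflick
  calc ((Finset.univ.filter (fun ω : Fin L → Bool =>
        ∃ t ≤ j, flickTail x j (extBits ω) t = v)).card : ℝ)
      ≤ (((Finset.range (j + 1)).biUnion (fun s => Finset.univ.filter
          (fun ω : Fin L → Bool => flickAux (x j) j (extBits ω) s = v))).card : ℝ) := by
        exact_mod_cast Finset.card_le_card hsubset
    _ ≤ ∑ s ∈ Finset.range (j + 1), ((Finset.univ.filter
          (fun ω : Fin L → Bool => flickAux (x j) j (extBits ω) s = v)).card : ℝ) := by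
        exact_mod_cast Finset.card_biUnion_le
    _ ≤ _ := by
        apply Finset.sum_le_sum
        intro s hsr
        rw [Finset.mem_range] at hsr
        by_cases hd : delta n (x j) v (j % n) ≤ min s n + 1
        · rw [if_pos hd]
          exact_mod_cast count_flick_le hn hj (by omega) (x j) v
        · rw [if_neg hd]
          have hempty : (Finset.univ.filter
              (fun ω : Fin L → Bool => flickAux (x j) j (extBits ω) s = v)) = ∅ := by
            rw [Finset.filter_eq_empty_iff]
            intro ω _ hflick
            exact hd (delta_le_of_flick hn (x j) v (by omega) (extBits ω) hflick)
          rw [hempty]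
          simp

lemma pow_sub_real {L s : ℕ} (h : s ≤ L) : (2:ℝ) ^ (L - s) = 2 ^ L * ((1:ℝ)/2) ^ s := by
  have hmul : (2:ℝ) ^ (L - s) * 2 ^ s = 2 ^ L := by
    rw [← pow_add]; congr 1; omega
  have h2 : ((2:ℝ) ^ s) ≠ 0 := by positivity
  rw [div_pow, one_pow]
  field_simp
  linarith [hmul]

lemma geom_tail (a N : ℕ) : ∑ s ∈ Finset.Ico a N, ((1:ℝ)/2) ^ s ≤ 2 * ((1:ℝ)/2) ^ a := by
  rw [Finset.sum_Ico_eq_sum_range]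
  have hc : ∀ i ∈ Finset.range (N - a), ((1:ℝ)/2) ^ (a + i) = ((1:ℝ)/2) ^ a * ((1:ℝ)/2) ^ i :=
    fun i _ => pow_add _ _ _
  rw [Finset.sum_congr rfl hc, ← Finset.mul_sum]
  have h2 := sum_geometric_two_le (N - a)
  have hpos : (0:ℝ) ≤ ((1:ℝ)/2) ^ a := by positivity
  nlinarith [h2, hpos]

lemma half_pow_pred (d : ℕ) : 2 * ((1:ℝ)/2) ^ (d - 1) ≤ 4 * ((1:ℝ)/2) ^ d := by
  cases d with
  | zero => norm_num
  | succ k =>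
      rw [Nat.succ_sub_one, pow_succ]
      ring_nf
      nlinarith [pow_nonneg (by norm_num : (0:ℝ) ≤ 1/2) k]

lemma sum_indicator_le {n L : ℕ} (hn : 1 ≤ n) (hnL : n ≤ L) {j : ℕ} (hj : j < L) (d : ℕ) :
    ∑ s ∈ Finset.range (j + 1),
        (if d ≤ min s n + 1 then (2 : ℝ) ^ (L - min s n) else 0)
      ≤ (2:ℝ) ^ L * (4 * ((1:ℝ)/2) ^ d + L * ((1:ℝ)/2) ^ n) := by
  set f : ℕ → ℝ := fun s => if d ≤ min s n + 1 then (2 : ℝ) ^ (L - min s n) else 0 with hf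
  have hfnonneg : ∀ s, 0 ≤ f s := by
    intro s
    rw [hf]
    dsimp only
    split
    · positivity
    · exact le_refl 0
  have hsplit : ∑ s ∈ Finset.range (j + 1), f s
      ≤ ∑ s ∈ Finset.range n, f s + ∑ s ∈ Finset.Ico n (j + 1), f s := by
    rw [← Finset.sum_union]
    · apply Finset.sum_le_sum_of_subset_of_nonneg
      · intro s hs
        rw [Finset.mem_range] at hs
        rw [Finset.mem_union, Finset.mem_range, Finset.mem_Ico]
        omega
      · intro s _ _; exact hfnonneg s
    · rw [Finset.range_eq_Ico]
      exact Finset.Ico_disjoint_Ico_consecutive 0 n (j + 1)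
  have hA : ∑ s ∈ Finset.range n, f s ≤ (2:ℝ) ^ L * (4 * ((1:ℝ)/2) ^ d) := by
    have hzero : ∀ s ∈ Finset.range n, s ∉ Finset.Ico (d - 1) n → f s = 0 := by
      intro s hs hns
      rw [Finset.mem_range] at hs
      rw [Finset.mem_Ico] at hns
      rw [hf]
      dsimp only
      rw [if_neg]
      have : min s n = s := by omega
      omega
    rw [← Finset.sum_subset (by rw [Finset.range_eq_Ico]; apply Finset.Ico_subset_Ico <;> omega) hzero]
    have hterm : ∀ s ∈ Finset.Ico (d - 1) n, f s ≤ (2:ℝ) ^ L * ((1:ℝ)/2) ^ s := by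
      intro s hs
      rw [Finset.mem_Ico] at hs
      have hmin : min s n = s := by omega
      rw [hf]
      dsimp only
      rw [hmin]
      split
      · rw [pow_sub_real (by omega)]
      · positivity
    calc ∑ s ∈ Finset.Ico (d - 1) n, f s
        ≤ ∑ s ∈ Finset.Ico (d - 1) n, (2:ℝ) ^ L * ((1:ℝ)/2) ^ s := Finset.sum_le_sum hterm
      _ = (2:ℝ) ^ L * ∑ s ∈ Finset.Ico (d - 1) n, ((1:ℝ)/2) ^ s := by rw [Finset.mul_sum]
      _ ≤ (2:ℝ) ^ L * (2 * ((1:ℝ)/2) ^ (d - 1)) := by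
          apply mul_le_mul_of_nonneg_left (geom_tail _ _) (by positivity)
      _ ≤ (2:ℝ) ^ L * (4 * ((1:ℝ)/2) ^ d) := by
          apply mul_le_mul_of_nonneg_left (half_pow_pred d) (by positivity)
  have hB : ∑ s ∈ Finset.Ico n (j + 1), f s ≤ (2:ℝ) ^ L * (L * ((1:ℝ)/2) ^ n) := by
    have hterm : ∀ s ∈ Finset.Ico n (j + 1), f s ≤ (2:ℝ) ^ L * ((1:ℝ)/2) ^ n := by
      intro s hs
      rw [Finset.mem_Ico] at hs
      have hmin : min s n = n := by omega
      rw [hf]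
      dsimp only
      rw [hmin]
      split
      · rw [pow_sub_real hnL]
      · positivity
    calc ∑ s ∈ Finset.Ico n (j + 1), f s
        ≤ ∑ s ∈ Finset.Ico n (j + 1), (2:ℝ) ^ L * ((1:ℝ)/2) ^ n := Finset.sum_le_sum hterm
      _ = ((j + 1 - n : ℕ) : ℝ) * ((2:ℝ) ^ L * ((1:ℝ)/2) ^ n) := by
          rw [Finset.sum_const, Nat.card_Ico, nsmul_eq_mul]
      _ ≤ (L : ℝ) * ((2:ℝ) ^ L * ((1:ℝ)/2) ^ n) := by
          have hle : ((j + 1 - n : ℕ) : ℝ) ≤ (L : ℝ) := by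
            have h9 : j + 1 - n ≤ L := by omega
            exact_mod_cast h9
          exact mul_le_mul_of_nonneg_right hle (by positivity)
      _ = (2:ℝ) ^ L * (L * ((1:ℝ)/2) ^ n) := by ring
  calc ∑ s ∈ Finset.range (j + 1), f s
      ≤ ∑ s ∈ Finset.range n, f s + ∑ s ∈ Finset.Ico n (j + 1), f s := hsplit
    _ ≤ (2:ℝ) ^ L * (4 * ((1:ℝ)/2) ^ d) + (2:ℝ) ^ L * (L * ((1:ℝ)/2) ^ n) := add_le_add hA hB
    _ = (2:ℝ) ^ L * (4 * ((1:ℝ)/2) ^ d + L * ((1:ℝ)/2) ^ n) := by ring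

lemma sum_S_le {n L : ℕ} (hn : 1 ≤ n) {c : ℝ} (hc : 0 < c)
    (x : ℕ → Fin n → Bool) (v : Fin n → Bool)
    (hsp : IsSparse c n L x)
    (hL1 : (L : ℝ) * ((1:ℝ)/2) ^ n ≤ 1) :
    ∑ j ∈ Finset.range L, ((1:ℝ)/2) ^ (delta n (x j) v (j % n)) ≤ 4 * c * (n : ℝ) ^ 2 := by
  classical
  have hmap : ∀ j ∈ Finset.range L, delta n (x j) v (j % n) ∈ Finset.range (n + 1) := by
    intro j _
    rw [Finset.mem_range]
    have := delta_le_n (x j) v (Nat.mod_lt j hn)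
    omega
  rw [← Finset.sum_fiberwise_of_maps_to hmap (fun j => ((1:ℝ)/2) ^ (delta n (x j) v (j % n)))]
  have hinner : ∀ k ∈ Finset.range (n + 1),
      ∑ j ∈ (Finset.range L).filter (fun j => delta n (x j) v (j % n) = k),
          ((1:ℝ)/2) ^ (delta n (x j) v (j % n))
        = (((Finset.range L).filter (fun j => delta n (x j) v (j % n) = k)).card : ℝ)
            * ((1:ℝ)/2) ^ k := by
    intro k _
    rw [Finset.sum_congr rfl (fun j hj => by rw [(Finset.mem_filter.mp hj).2]),
      Finset.sum_const, nsmul_eq_mul]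
  rw [Finset.sum_congr rfl hinner]
  have hbound : ∀ k ∈ Finset.range (n + 1),
      (((Finset.range L).filter (fun j => delta n (x j) v (j % n) = k)).card : ℝ)
          * ((1:ℝ)/2) ^ k
        ≤ c * n * ((n : ℝ) * ((1:ℝ)/2) ^ k + (L : ℝ) * ((1:ℝ)/2) ^ n) := by
    intro k hk
    rw [Finset.mem_range] at hk
    have hsp' := hsp v k (by omega)
    have h2 : (2:ℝ) ^ (n - k) * (2:ℝ) ^ k = 2 ^ n := by rw [← pow_add]; congr 1; omega
    have hkey : ((L : ℝ) / 2 ^ (n - k)) * ((1:ℝ)/2) ^ k = (L : ℝ) * ((1:ℝ)/2) ^ n := by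
      rw [div_pow, one_pow, div_pow, one_pow, div_mul_div_comm, mul_one, h2, mul_one_div]
    calc (((Finset.range L).filter (fun j => delta n (x j) v (j % n) = k)).card : ℝ)
            * ((1:ℝ)/2) ^ k
        ≤ (c * n * ((n : ℝ) + (L : ℝ) / 2 ^ (n - k))) * ((1:ℝ)/2) ^ k :=
          mul_le_mul_of_nonneg_right hsp' (by positivity)
      _ = c * n * ((n : ℝ) * ((1:ℝ)/2) ^ k + ((L : ℝ) / 2 ^ (n - k)) * ((1:ℝ)/2) ^ k) := by
          ring
      _ = c * n * ((n : ℝ) * ((1:ℝ)/2) ^ k + (L : ℝ) * ((1:ℝ)/2) ^ n) := by rw [hkey]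
  calc ∑ k ∈ Finset.range (n + 1),
        (((Finset.range L).filter (fun j => delta n (x j) v (j % n) = k)).card : ℝ)
          * ((1:ℝ)/2) ^ k
      ≤ ∑ k ∈ Finset.range (n + 1),
          c * n * ((n : ℝ) * ((1:ℝ)/2) ^ k + (L : ℝ) * ((1:ℝ)/2) ^ n) :=
        Finset.sum_le_sum hbound
    _ = c * n * ((n : ℝ) * (∑ k ∈ Finset.range (n + 1), ((1:ℝ)/2) ^ k)
          + ((n : ℝ) + 1) * ((L : ℝ) * ((1:ℝ)/2) ^ n)) := by
        rw [← Finset.mul_sum]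
        congr 1
        rw [Finset.sum_add_distrib, ← Finset.mul_sum, Finset.sum_const, Finset.card_range,
          nsmul_eq_mul]
        push_cast
        ring
    _ ≤ 4 * c * (n : ℝ) ^ 2 := by
        have hgeo := sum_geometric_two_le (n + 1)
        have hgeon : (0:ℝ) ≤ ∑ k ∈ Finset.range (n + 1), ((1:ℝ)/2) ^ k :=
          Finset.sum_nonneg (fun k _ => by positivity)
        have hLn : (0:ℝ) ≤ (L : ℝ) * ((1:ℝ)/2) ^ n := by positivity
        have hn' : (1:ℝ) ≤ (n : ℝ) := by exact_mod_cast hn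
        have hcn : (0:ℝ) ≤ c * n := by positivity
        nlinarith [mul_le_mul_of_nonneg_left hgeo hcn, mul_le_mul_of_nonneg_left hL1 hcn,
          mul_nonneg hcn (sub_nonneg.mpr hn')]

/-- **Sparse snakes are unlikely to hit any given vertex when they flick their tails.**
For every `c > 0` there is a `c' > 0` such that for all `n ≥ 1`, all `L` with
`n ≤ L ≤ 2^{n/2}`, and every `c`-sparse snake `x` in the support of `D_{h,L}` on
`{0,1}^n`: if `j` is drawn uniformly from `{0,…,L-1}` and `Y` is obtained from `x` by
flicking the tail at `j`, then for every vertex `v`,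
`Pr_{j,Y}[v ∈ Y[j]] ≤ c'·n²/L`. -/
theorem stmt_11 :
    ∀ c > (0 : ℝ), ∃ c' > (0 : ℝ), ∀ n : ℕ, 1 ≤ n → ∀ L : ℕ, n ≤ L →
      (L : ℝ) ≤ (2 : ℝ) ^ ((n : ℝ) / 2) → ∀ h : Fin n → Bool,
      ∀ x : ℕ → Fin n → Bool, x 0 = h →
      (∀ t, t + 1 < L → x (t + 1) = x t ∨ x (t + 1) = flipBitHC (x t) t) →
      IsSparse c n L x →
      ∀ v : Fin n → Bool,
        unifPr (fun ω : Fin L × (Fin L → Bool) =>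
            ∃ t ≤ (ω.1 : ℕ), flickTail x (ω.1 : ℕ) (extBits ω.2) t = v)
          ≤ c' * (n : ℝ) ^ 2 / L := by
  intro c hc
  refine ⟨16 * c + 1, by positivity, ?_⟩
  intro n hn L hnL hLrpow h x hx0 hstep hsp v
  classical
  have hL0 : 0 < L := by omega
  have hL0' : (0:ℝ) < (L : ℝ) := by exact_mod_cast hL0
  -- bounds from L ≤ 2^(n/2)
  have h2n : (0:ℝ) < (2:ℝ) ^ n := by positivity
  have hLsq : (L : ℝ) ^ 2 ≤ (2:ℝ) ^ n := by
    have h1 : ((2:ℝ) ^ ((n : ℝ) / 2)) ^ 2 = (2:ℝ) ^ (n : ℕ) := by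
      rw [← Real.rpow_natCast ((2:ℝ) ^ ((n : ℝ) / 2)) 2, ← Real.rpow_mul (by norm_num)]
      rw [show (n : ℝ) / 2 * ((2:ℕ) : ℝ) = (n : ℝ) by push_cast; ring]
      rw [Real.rpow_natCast]
    calc (L : ℝ) ^ 2 ≤ ((2:ℝ) ^ ((n : ℝ) / 2)) ^ 2 := by
          apply pow_le_pow_left₀ (by positivity) hLrpow
      _ = (2:ℝ) ^ n := h1
  have hLL1 : (L : ℝ) ^ 2 * ((1:ℝ)/2) ^ n ≤ 1 := by
    rw [div_pow, one_pow, mul_one_div, div_le_one h2n]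
    exact hLsq
  have hL1 : (L : ℝ) * ((1:ℝ)/2) ^ n ≤ 1 := by
    have hLge : (1:ℝ) ≤ (L : ℝ) := by exact_mod_cast hL0
    nlinarith [pow_nonneg (by norm_num : (0:ℝ) ≤ 1/2) n]
  set P : Fin L × (Fin L → Bool) → Prop := fun ω =>
    ∃ t ≤ (ω.1 : ℕ), flickTail x (ω.1 : ℕ) (extBits ω.2) t = v with hP
  show unifPr P ≤ (16 * c + 1) * (n : ℝ) ^ 2 / L
  have hcard : (Nat.card {ω : Fin L × (Fin L → Bool) // P ω} : ℝ)
      = ((Finset.univ.filter P).card : ℝ) := by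
    rw [Nat.card_eq_fintype_card, Fintype.card_subtype]
  have hΩ : ((Fintype.card (Fin L × (Fin L → Bool))) : ℝ) = (L : ℝ) * 2 ^ L := by
    rw [Fintype.card_prod, Fintype.card_fun, Fintype.card_fin, Fintype.card_bool]
    push_cast
    ring
  -- fiber decomposition
  have hfib : (Finset.univ.filter P).card
      = ∑ jf : Fin L, (Finset.univ.filter (fun ω₂ : Fin L → Bool => P (jf, ω₂))).card := by
    rw [Finset.card_eq_sum_card_fiberwise
      (f := Prod.fst) (t := Finset.univ) (fun ω _ => Finset.mem_univ _)]
    apply Finset.sum_congr rfl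
    intro jf _
    refine Finset.card_bij' (fun ω _ => ω.2) (fun ω₂ _ => (jf, ω₂)) ?_ ?_ ?_ ?_
    · intro ω hω
      rw [Finset.mem_filter] at hω
      obtain ⟨hω1, hω2⟩ := hω
      rw [Finset.mem_filter] at hω1
      rw [Finset.mem_filter]
      refine ⟨Finset.mem_univ _, ?_⟩
      have : (jf, ω.2) = ω := by rw [← hω2]
      rw [this]
      exact hω1.2
    · intro ω₂ hω₂
      rw [Finset.mem_filter] at hω₂ ⊢
      exact ⟨Finset.mem_filter.mpr ⟨Finset.mem_univ _, hω₂.2⟩, rfl⟩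
    · intro ω hω
      rw [Finset.mem_filter] at hω
      exact Prod.ext hω.2.symm rfl
    · intro ω₂ _
      rfl
  -- per-fiber bound
  have hperj : ∀ jf : Fin L,
      ((Finset.univ.filter (fun ω₂ : Fin L → Bool => P (jf, ω₂))).card : ℝ)
        ≤ (2:ℝ) ^ L * (4 * ((1:ℝ)/2) ^ (delta n (x (jf : ℕ)) v ((jf : ℕ) % n))
            + (L : ℝ) * ((1:ℝ)/2) ^ n) := by
    intro jf
    have h1 := count_event_le hn jf.isLt x v
    have h2 := sum_indicator_le hn hnL jf.isLt (delta n (x (jf : ℕ)) v ((jf : ℕ) % n))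
    calc ((Finset.univ.filter (fun ω₂ : Fin L → Bool => P (jf, ω₂))).card : ℝ)
        = ((Finset.univ.filter (fun ω₂ : Fin L → Bool =>
            ∃ t ≤ (jf : ℕ), flickTail x (jf : ℕ) (extBits ω₂) t = v)).card : ℝ) := by rfl
      _ ≤ _ := le_trans h1 h2
  -- total bound
  have hS := sum_S_le hn hc x v hsp hL1
  have htot : ((Finset.univ.filter P).card : ℝ) ≤ (16 * c + 1) * (n : ℝ) ^ 2 * 2 ^ L := by
    have hstep1 : ((Finset.univ.filter P).card : ℝ)
        = ∑ jf : Fin L, ((Finset.univ.filter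
            (fun ω₂ : Fin L → Bool => P (jf, ω₂))).card : ℝ) := by
      rw [hfib]
      push_cast
      rfl
    have hstep2 : ∑ jf : Fin L, ((Finset.univ.filter
          (fun ω₂ : Fin L → Bool => P (jf, ω₂))).card : ℝ)
        ≤ ∑ jf : Fin L, (2:ℝ) ^ L * (4 * ((1:ℝ)/2) ^ (delta n (x (jf : ℕ)) v ((jf : ℕ) % n))
            + (L : ℝ) * ((1:ℝ)/2) ^ n) :=
      Finset.sum_le_sum (fun jf _ => hperj jf)
    have hstep3 : ∑ jf : Fin L, (2:ℝ) ^ L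
          * (4 * ((1:ℝ)/2) ^ (delta n (x (jf : ℕ)) v ((jf : ℕ) % n))
            + (L : ℝ) * ((1:ℝ)/2) ^ n)
        = (2:ℝ) ^ L * (4 * (∑ j ∈ Finset.range L,
            ((1:ℝ)/2) ^ (delta n (x j) v (j % n)))
          + (L : ℝ) ^ 2 * ((1:ℝ)/2) ^ n) := by
      rw [← Finset.mul_sum]
      congr 1
      rw [Finset.sum_add_distrib, ← Finset.mul_sum, Finset.sum_const, Finset.card_univ,
        Fintype.card_fin, nsmul_eq_mul]
      rw [Fin.sum_univ_eq_sum_range (fun j => ((1:ℝ)/2) ^ (delta n (x j) v (j % n)))]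
      ring
    have hlast : (2:ℝ) ^ L * (4 * (∑ j ∈ Finset.range L,
            ((1:ℝ)/2) ^ (delta n (x j) v (j % n)))
          + (L : ℝ) ^ 2 * ((1:ℝ)/2) ^ n) ≤ (16 * c + 1) * (n : ℝ) ^ 2 * 2 ^ L := by
      have h2L : (0:ℝ) < 2 ^ L := by positivity
      have hn2 : (1:ℝ) ≤ (n : ℝ) ^ 2 := by
        have h9 : (1:ℝ) ≤ (n : ℝ) := by exact_mod_cast hn
        nlinarith
      nlinarith [mul_le_mul_of_nonneg_left hS h2L.le,
        mul_le_mul_of_nonneg_left hLL1 h2L.le,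
        mul_le_mul_of_nonneg_left hn2 h2L.le]
    calc ((Finset.univ.filter P).card : ℝ)
        = ∑ jf : Fin L, ((Finset.univ.filter
            (fun ω₂ : Fin L → Bool => P (jf, ω₂))).card : ℝ) := hstep1
      _ ≤ _ := hstep2
      _ = _ := hstep3
      _ ≤ (16 * c + 1) * (n : ℝ) ^ 2 * 2 ^ L := hlast
  -- final division
  unfold unifPr
  rw [hcard, hΩ]
  have hD : (0:ℝ) < (L : ℝ) * 2 ^ L := by positivity
  calc ((Finset.univ.filter P).card : ℝ) / ((L : ℝ) * 2 ^ L)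
      ≤ ((16 * c + 1) * (n : ℝ) ^ 2 * 2 ^ L) / ((L : ℝ) * 2 ^ L) := by
        gcongr
      _ = (16 * c + 1) * (n : ℝ) ^ 2 / L := by
        have h2L0 : ((2:ℝ) ^ L) ≠ 0 := by positivity
        field_simp
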